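/- arXiv:0807.5138 — 2 statements merged into one kernel-verified Lean document; each statement's English description precedes it below -/
import Mathlib

section
/- Let G be a group, let H be a finitely generated subgroup of G, and let t ∈ G be such that t⁻¹Ht is a proper subgroup of H. Then the family of subgroups (tⁿHt⁻ⁿ) for n ≥ 0 is strictly increasing, its union is a subgroup of G, and this union is not finitely generated. -/
/-!
Applying the automorphism `tⁿ · t⁻ⁿ` to `t⁻¹Ht < H` gives `tⁿ⁻¹Ht¹⁻ⁿ < tⁿHt⁻ⁿ`, so the chain is
strictly increasing. A finite generating set of the union would lie in a single term of the
chain, which would then contain every later term.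
-/

namespace Subgroup

variable {G : Type*} [Group G]

theorem FG.exists_iSup_le_of_directed {ι : Type*} [Nonempty ι] {K : ι → Subgroup G}
    (hK : Directed (· ≤ ·) K) (hfg : (⨆ i, K i).FG) : ∃ i, ⨆ j, K j ≤ K i := by
  classical
  obtain ⟨S, hS⟩ := hfg
  have hmem : ∀ s ∈ S, ∃ i, s ∈ K i := fun s hs =>
    (mem_iSup_of_directed hK).mp (hS ▸ subset_closure hs)
  choose! index hindex using hmem
  obtain ⟨i, hi⟩ := hK.finset_le (S.image index)
  refine ⟨i, ?_⟩
  rw [← hS, closure_le]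
  exact fun s hs => hi _ (Finset.mem_image_of_mem index hs) (hindex s hs)

theorem not_fg_iSup_of_strictMono {K : ℕ → Subgroup G} (hK : StrictMono K) :
    ¬ (⨆ n, K n).FG := fun hfg => by
  obtain ⟨N, hN⟩ := hfg.exists_iSup_le_of_directed hK.monotone.directed_le
  exact (hK N.lt_succ_self).not_ge ((le_iSup K (N + 1)).trans hN)

theorem lt_map_of_map_inv_lt {H : Subgroup G} {φ : MulAut G}
    (h : H.map (φ⁻¹).toMonoidHom < H) : H < H.map φ.toMonoidHom := by
  have := (map_lt_map_iff_of_injective (f := φ.toMonoidHom) φ.injective).mpr h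
  rwa [map_map, show φ.toMonoidHom.comp (φ⁻¹).toMonoidHom = MonoidHom.id G by
    ext; simp, map_id] at this

theorem strictMono_map_pow_of_map_inv_lt {H : Subgroup G} {φ : MulAut G}
    (h : H.map (φ⁻¹).toMonoidHom < H) :
    StrictMono fun n : ℕ => H.map (φ ^ n).toMonoidHom := by
  refine strictMono_nat_of_lt_succ fun n => ?_
  have hmap : H.map (φ ^ (n + 1)).toMonoidHom =
      (H.map φ.toMonoidHom).map (φ ^ n).toMonoidHom := by
    rw [map_map, pow_succ]; rfl
  rw [hmap]
  exact (map_lt_map_iff_of_injective (f := (φ ^ n).toMonoidHom) (φ ^ n).injective).mpr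
    (lt_map_of_map_inv_lt h)

end Subgroup

theorem union_of_strictly_increasing_conjugates_not_fg_general {G : Type*} [Group G]
    (H : Subgroup G) (t : G)
    (hlt : H.map (MulAut.conj t⁻¹).toMonoidHom < H) :
    StrictMono (fun n : ℕ => H.map (MulAut.conj (t ^ n)).toMonoidHom) ∧
    ∃ U : Subgroup G,
      (U : Set G) = (⋃ n : ℕ, (H.map (MulAut.conj (t ^ n)).toMonoidHom : Set G)) ∧
      ¬ U.FG := by
  simp only [map_pow, map_inv] at hlt ⊢
  have hmono := Subgroup.strictMono_map_pow_of_map_inv_lt hlt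
  exact ⟨hmono, _, Subgroup.coe_iSup_of_directed hmono.monotone.directed_le,
    Subgroup.not_fg_iSup_of_strictMono hmono⟩

/-- **Statement 4.** If `H` is a finitely generated subgroup of `G` and `t⁻¹ H t` is a
proper subgroup of `H`, then the family `(tⁿ H t⁻ⁿ)_{n ≥ 0}` is strictly increasing, its
union is a subgroup of `G`, and this union is not finitely generated. -/
theorem union_of_strictly_increasing_conjugates_not_fg {G : Type*} [Group G]
    (H : Subgroup G) (hfg : H.FG) (t : G)
    (hlt : H.map (MulAut.conj t⁻¹).toMonoidHom < H) :
    StrictMono (fun n : ℕ => H.map (MulAut.conj (t ^ n)).toMonoidHom) ∧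
    ∃ U : Subgroup G,
      (U : Set G) = (⋃ n : ℕ, (H.map (MulAut.conj (t ^ n)).toMonoidHom : Set G)) ∧
      ¬ U.FG :=
  union_of_strictly_increasing_conjugates_not_fg_general H t hlt
end

section
/- Let G be a group generated by a subgroup H together with an element t such that t⁻¹ht ∈ H for every h ∈ H, and let χ : G → ℤ be a group homomorphism with χ(h) = 0 for all h ∈ H and χ(t) = 1. Then every element of G can be written in the form tᵃ h t⁻ᵇ with integers a, b ≥ 0 and h ∈ H, and the kernel of χ equals the union over n ≥ 0 of the subgroups tⁿHt⁻ⁿ. -/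
/-!
Since `t⁻¹ H t ⊆ H`, also `t⁻ⁿ H tⁿ ⊆ H`, so in a product `tᵃ h t⁻ᵇ · tᶜ k t⁻ᵈ` the inner
power `t^(c - b)` (or `t^(b - c)`) can be pushed through `h` (or `k`) into `H`. Hence the
elements `tᵃ h t⁻ᵇ` form a subgroup containing `H` and `t`, which is all of `G`. On such an
element `χ` takes the value `a - b`, so it lies in the kernel exactly when `a = b`, i.e. when
it lies in `tᵃ H t⁻ᵃ`.
-/

namespace AscendingHNN

variable {G : Type*} [Group G] {H : Subgroup G}

theorem mem_map_conj_iff {x g : G} :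
    g ∈ H.map (MulAut.conj x).toMonoidHom ↔ ∃ h ∈ H, x * h * x⁻¹ = g := by
  simp [MulAut.conj_apply]

variable (H) (t : G)

def normalForms : Set G :=
  {g | ∃ (a b : ℕ) (h : G), h ∈ H ∧ g = t ^ a * h * (t ^ b)⁻¹}

variable {H t}

theorem inv_pow_mul_mul_pow_mem (hconj : ∀ h ∈ H, t⁻¹ * h * t ∈ H) (n : ℕ) {h : G}
    (hh : h ∈ H) : (t ^ n)⁻¹ * h * t ^ n ∈ H := by
  induction n generalizing h with
  | zero => simpa using hh
  | succ n ih =>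
    have hsplit : (t ^ (n + 1))⁻¹ * h * t ^ (n + 1) = (t ^ n)⁻¹ * (t⁻¹ * h * t) * t ^ n := by
      rw [pow_succ]; group
    exact hsplit ▸ ih (hconj h hh)

theorem inv_mem_normalForms {g : G} (hg : g ∈ normalForms H t) : g⁻¹ ∈ normalForms H t := by
  obtain ⟨a, b, h, hh, rfl⟩ := hg
  exact ⟨b, a, h⁻¹, H.inv_mem hh, by group⟩

theorem mul_mem_normalForms_of_le (hconj : ∀ h ∈ H, t⁻¹ * h * t ∈ H) {a b c d : ℕ} {h k : G}
    (hh : h ∈ H) (hk : k ∈ H) (hbc : b ≤ c) :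
    t ^ a * h * (t ^ b)⁻¹ * (t ^ c * k * (t ^ d)⁻¹) ∈ normalForms H t := by
  obtain ⟨e, rfl⟩ := Nat.exists_eq_add_of_le hbc
  refine ⟨a + e, d, (t ^ e)⁻¹ * h * t ^ e * k,
    H.mul_mem (inv_pow_mul_mul_pow_mem hconj e hh) hk, ?_⟩
  rw [pow_add, pow_add]
  group

theorem mul_mem_normalForms (hconj : ∀ h ∈ H, t⁻¹ * h * t ∈ H) {x y : G}
    (hx : x ∈ normalForms H t) (hy : y ∈ normalForms H t) : x * y ∈ normalForms H t := by
  obtain ⟨a, b, h, hh, rfl⟩ := hx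
  obtain ⟨c, d, k, hk, rfl⟩ := hy
  rcases le_total b c with hbc | hcb
  · exact mul_mem_normalForms_of_le hconj hh hk hbc
  · -- the case `c ≤ b` is the case `b ≤ c` for the inverse product
    have hinv := mul_mem_normalForms_of_le (a := d) (d := a) hconj (H.inv_mem hk)
      (H.inv_mem hh) hcb
    convert inv_mem_normalForms hinv using 1
    group

def normalFormSubgroup (hconj : ∀ h ∈ H, t⁻¹ * h * t ∈ H) : Subgroup G where
  carrier := normalForms H t
  mul_mem' := mul_mem_normalForms hconj
  one_mem' := ⟨0, 0, 1, H.one_mem, by simp⟩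
  inv_mem' := inv_mem_normalForms

theorem mem_normalForms (hgen : Subgroup.closure ((H : Set G) ∪ {t}) = ⊤)
    (hconj : ∀ h ∈ H, t⁻¹ * h * t ∈ H) (g : G) : g ∈ normalForms H t := by
  have hle : Subgroup.closure ((H : Set G) ∪ {t}) ≤ normalFormSubgroup hconj := by
    rw [Subgroup.closure_le, Set.union_subset_iff, Set.singleton_subset_iff]
    exact ⟨fun h hh => ⟨0, 0, h, hh, by simp⟩, ⟨1, 0, 1, H.one_mem, by simp⟩⟩
  exact hle (hgen ▸ Subgroup.mem_top g)

theorem apply_pow_mul_mul_inv_pow {χ : G → ℤ} (hhom : ∀ a b : G, χ (a * b) = χ a + χ b)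
    (hH : ∀ h ∈ H, χ h = 0) (ht : χ t = 1) {a b : ℕ} {h : G} (hh : h ∈ H) :
    χ (t ^ a * h * (t ^ b)⁻¹) = a - b := by
  let f : G →* Multiplicative ℤ :=
    MonoidHom.mk' (fun g => Multiplicative.ofAdd (χ g)) fun x y => by simp [hhom]
  have hχ : ∀ g, χ g = (f g).toAdd := fun _ => rfl
  rw [hχ, map_mul f, map_mul f, map_inv f, map_pow f, map_pow f]
  simp only [toAdd_mul, toAdd_inv, toAdd_pow, ← hχ, ht, hH h hh]
  simp [sub_eq_add_neg]

end AscendingHNN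

open AscendingHNN in
/-- **Statement 5.** If `G` is generated by a subgroup `H` together with `t`, where
`t⁻¹ H t ⊆ H`, and `χ : G → ℤ` is a homomorphism with `χ(H) = 0` and `χ(t) = 1`, then
every element of `G` has the form `tᵃ h t⁻ᵇ` with `a, b ≥ 0` and `h ∈ H`, and the kernel
of `χ` is the union of the subgroups `tⁿ H t⁻ⁿ` for `n ≥ 0`. -/
theorem ascending_hnn_normal_form_and_kernel {G : Type*} [Group G] (H : Subgroup G) (t : G)
    (hgen : Subgroup.closure ((H : Set G) ∪ {t}) = ⊤)
    (hconj : ∀ h ∈ H, t⁻¹ * h * t ∈ H)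
    (χ : G → ℤ) (hhom : ∀ a b : G, χ (a * b) = χ a + χ b)
    (hH : ∀ h ∈ H, χ h = 0) (ht : χ t = 1) :
    (∀ g : G, ∃ (a b : ℕ) (h : G), h ∈ H ∧ g = t ^ a * h * (t ^ b)⁻¹) ∧
    (∀ g : G, χ g = 0 ↔ ∃ n : ℕ, g ∈ H.map (MulAut.conj (t ^ n)).toMonoidHom) := by
  refine ⟨mem_normalForms hgen hconj, fun g => ⟨fun hg => ?_, ?_⟩⟩
  · obtain ⟨a, b, h, hh, rfl⟩ := mem_normalForms hgen hconj g
    rw [apply_pow_mul_mul_inv_pow hhom hH ht hh, sub_eq_zero, Nat.cast_inj] at hg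
    exact ⟨a, mem_map_conj_iff.2 ⟨h, hh, by rw [hg]⟩⟩
  · rintro ⟨n, hn⟩
    obtain ⟨h, hh, rfl⟩ := mem_map_conj_iff.1 hn
    rw [apply_pow_mul_mul_inv_pow hhom hH ht hh, sub_self]
end
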